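/- arXiv:math/9712254 — 4 statements merged into one kernel-verified Lean document; each statement's English description precedes it below -/
import Mathlib

section
/- Let n ≥ 1, z ∈ ℂ, and let (α_1, …, α_n) be an enumeration of the n distinct n-th roots of unity. Set d(z) = diag(1, z, z², …, z^{n−1}), Λ_{jk} = α_k^{j−1}, Λ_z = d(z)Λ, and J(z) = diag(α_1, …, α_n). Then J_z Λ_z = z Λ_z J(z). -/
/-!
Column `k` of `Λ_z` is the geometric vector `((z α_k)^i)_i`. The matrix `J_z` shifts a vector up
by one and puts `z^n` times its first entry in the last slot, so it maps a geometric vector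
`(w^i)_i` to `w • (w^i)_i` as soon as `w^n = z^n`, which holds for `w = z α_k` because `α_k^n = 1`.
Hence every column of `Λ_z` is an eigenvector of `J_z` with eigenvalue `z α_k`.
-/

open Matrix

variable {R : Type*} [CommRing R]

def cyclicShift (n : ℕ) (c : R) : Matrix (Fin n) (Fin n) R :=
  of fun j k =>
    if (k : ℕ) = (j : ℕ) + 1 then 1 else if (j : ℕ) = n - 1 ∧ (k : ℕ) = 0 then c else 0

theorem cyclicShift_mulVec_geom {n : ℕ} {c w : R} (hw : w ^ n = c) :
    cyclicShift n c *ᵥ (fun i : Fin n => w ^ (i : ℕ)) = w • fun i : Fin n => w ^ (i : ℕ) := by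
  ext j
  simp only [mulVec, dotProduct, cyclicShift, of_apply, Pi.smul_apply, smul_eq_mul]
  by_cases hj : (j : ℕ) + 1 < n
  · rw [Fintype.sum_eq_single ⟨j + 1, hj⟩]
    · simp [pow_succ']
    · intro i hi
      have : (i : ℕ) ≠ j + 1 := fun h => hi (Fin.ext h)
      simp [this, show (j : ℕ) ≠ n - 1 by omega]
  · have hjn : (j : ℕ) = n - 1 := by omega
    rw [Fintype.sum_eq_single ⟨0, by omega⟩]
    · rw [if_neg (by simp), if_pos ⟨hjn, rfl⟩, Fin.val_mk, pow_zero, mul_one, ← hw, ← pow_succ',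
        hjn, Nat.sub_add_cancel (by omega)]
    · intro i hi
      have : (i : ℕ) ≠ 0 := fun h => hi (Fin.ext h)
      simp [this, show (i : ℕ) ≠ j + 1 by omega]

theorem diagonal_pow_mul_vandermonde {n : ℕ} (z : R) (α : Fin n → R) (i k : Fin n) :
    (diagonal (fun j : Fin n => z ^ (j : ℕ)) * of fun j k : Fin n => α k ^ (j : ℕ)) i k
      = (z * α k) ^ (i : ℕ) := by
  simp [mul_pow]

theorem statement5_general (n : ℕ) (z : ℂ) (α : Fin n → ℂ)
    (hroot : ∀ k, α k ^ n = 1)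
    (Jz : Matrix (Fin n) (Fin n) ℂ)
    (hJz : ∀ j k : Fin n, Jz j k =
      if (k : ℕ) = (j : ℕ) + 1 then 1
      else if (j : ℕ) = n - 1 ∧ (k : ℕ) = 0 then z ^ n else 0)
    (d Λ Λz J : Matrix (Fin n) (Fin n) ℂ)
    (hd : d = Matrix.diagonal fun j : Fin n => z ^ (j : ℕ))
    (hΛ : ∀ j k : Fin n, Λ j k = α k ^ (j : ℕ))
    (hΛz : Λz = d * Λ)
    (hJ : J = Matrix.diagonal α) :
    Jz * Λz = z • (Λz * J) := by
  have hJz : Jz = cyclicShift n (z ^ n) := Matrix.ext hJz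
  have hΛ : Λ = of fun j k : Fin n => α k ^ (j : ℕ) := Matrix.ext hΛ
  have hΛz_apply : ∀ i k, Λz i k = (z * α k) ^ (i : ℕ) := fun i k => by
    rw [hΛz, hd, hΛ, diagonal_pow_mul_vandermonde]
  ext j k
  have hw : (z * α k) ^ n = z ^ n := by rw [mul_pow, hroot, mul_one]
  calc (Jz * Λz) j k = (cyclicShift n (z ^ n) *ᵥ fun i : Fin n => (z * α k) ^ (i : ℕ)) j := by
        simp only [hJz, mul_apply, mulVec, dotProduct, hΛz_apply]
    _ = z * α k * (z * α k) ^ (j : ℕ) := by rw [cyclicShift_mulVec_geom hw]; rfl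
    _ = (z • (Λz * J)) j k := by
        simp only [Matrix.smul_apply, hJ, mul_diagonal, hΛz_apply, smul_eq_mul]; ring

/-- with `d(z) = diag(1, z, …, z^{n-1})`, `Λ_{jk} = α_k^{j-1}`,
`Λ_z = d(z)Λ`, and `J(z) = diag(α_1, …, α_n)`, we have `J_z Λ_z = z Λ_z J(z)`. -/
theorem statement5 (n : ℕ) (hn : 1 ≤ n) (z : ℂ) (α : Fin n → ℂ)
    (hinj : Function.Injective α) (hroot : ∀ k, α k ^ n = 1)
    (Jz : Matrix (Fin n) (Fin n) ℂ)
    (hJz : ∀ j k : Fin n, Jz j k =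
      if (k : ℕ) = (j : ℕ) + 1 then 1
      else if (j : ℕ) = n - 1 ∧ (k : ℕ) = 0 then z ^ n else 0)
    (d Λ Λz J : Matrix (Fin n) (Fin n) ℂ)
    (hd : d = Matrix.diagonal fun j : Fin n => z ^ (j : ℕ))
    (hΛ : ∀ j k : Fin n, Λ j k = α k ^ (j : ℕ))
    (hΛz : Λz = d * Λ)
    (hJ : J = Matrix.diagonal α) :
    Jz * Λz = z • (Λz * J) :=
  statement5_general n z α hroot Jz hJz d Λ Λz J hd hΛ hΛz hJ
end

section
/- Let n ≥ 1, z ∈ ℂ with z ≠ 0, x ∈ ℝ, and let (α_1, …, α_n) be an enumeration of the n distinct n-th roots of unity. Define the n×n matrices U and V by U_{jk} = (α_k z)^{j−1} e^{i x α_k z} and V_{jk} = (α_j / (n z^{n−1})) (α_j z)^{n−k} e^{−i x α_j z}. Then UV = I and VU = I. -/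
/-- with `U_{jk} = (α_k z)^{j-1} e^{ixα_k z}` and
`V_{jk} = (α_j/(n z^{n-1})) (α_j z)^{n-k} e^{-ixα_j z}` (0-based indices:
`U j k = (α k z)^j e^{ixα_k z}`, `V j k = (α_j/(n z^{n-1}))(α_j z)^{n-1-k} e^{-ixα_j z}`),
we have `UV = I` and `VU = I`. -/
theorem statement6 (n : ℕ) (hn : 1 ≤ n) (z : ℂ) (hz : z ≠ 0) (x : ℝ)
    (α : Fin n → ℂ) (hinj : Function.Injective α) (hroot : ∀ k, α k ^ n = 1)
    (U V : Matrix (Fin n) (Fin n) ℂ)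
    (hU : ∀ j k : Fin n, U j k = (α k * z) ^ (j : ℕ) * Complex.exp (Complex.I * x * (α k * z)))
    (hV : ∀ j k : Fin n, V j k =
      α j / ((n : ℂ) * z ^ (n - 1)) * (α j * z) ^ (n - 1 - (k : ℕ)) *
        Complex.exp (-(Complex.I * x * (α j * z)))) :
    U * V = 1 ∧ V * U = 1 := by
  have hn0 : (n : ℂ) ≠ 0 := Nat.cast_ne_zero.mpr (by omega)
  have hα0 : ∀ j : Fin n, α j ≠ 0 := by
    intro j h
    have := hroot j
    rw [h, zero_pow (by omega)] at this
    exact zero_ne_one this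
  have key : ∀ j k : Fin n,
      (∑ l : Fin n, (α j * z) ^ (n - 1 - (l : ℕ)) * (α k * z) ^ (l : ℕ)) =
        if j = k then (n : ℂ) * (α j * z) ^ (n - 1) else 0 := by
    intro j k
    by_cases hjk : j = k
    · subst hjk
      simp only [if_pos rfl]
      have : ∀ l : Fin n, (α j * z) ^ (n - 1 - (l : ℕ)) * (α j * z) ^ (l : ℕ)
          = (α j * z) ^ (n - 1) := by
        intro l
        rw [← pow_add]
        congr 1
        have := l.isLt
        omega
      rw [Finset.sum_congr rfl fun l _ => this l, Finset.sum_const, Finset.card_univ,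
        Fintype.card_fin, nsmul_eq_mul, if_pos trivial]
    · simp only [if_neg hjk]
      set a := α j * z with ha
      set b := α k * z with hb
      have hab : b - a ≠ 0 := by
        intro h
        apply hjk
        apply hinj
        have : b = a := by linear_combination h
        exact (mul_right_cancel₀ hz (hb ▸ ha ▸ this)).symm
      have hgs : (∑ i ∈ Finset.range n, b ^ i * a ^ (n - 1 - i)) * (b - a)
          = b ^ n - a ^ n := geom_sum₂_mul b a n
      have han : a ^ n = z ^ n := by
        rw [ha, mul_pow, hroot j, one_mul]
      have hbn : b ^ n = z ^ n := by
        rw [hb, mul_pow, hroot k, one_mul]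
      have hsum0 : (∑ i ∈ Finset.range n, b ^ i * a ^ (n - 1 - i)) = 0 := by
        have : (∑ i ∈ Finset.range n, b ^ i * a ^ (n - 1 - i)) * (b - a) = 0 := by
          rw [hgs, hbn, han, sub_self]
        exact (mul_eq_zero.mp this).resolve_right hab
      calc (∑ l : Fin n, a ^ (n - 1 - (l : ℕ)) * b ^ (l : ℕ))
          = ∑ i ∈ Finset.range n, b ^ i * a ^ (n - 1 - i) := by
            rw [Fin.sum_univ_eq_sum_range (fun i => a ^ (n - 1 - i) * b ^ i)]
            exact Finset.sum_congr rfl fun i _ => mul_comm _ _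
        _ = 0 := hsum0
  have hVU : V * U = 1 := by
    ext j k
    have hexp : Complex.exp (-(Complex.I * x * (α j * z))) *
        Complex.exp (Complex.I * x * (α j * z)) = 1 := by
      rw [← Complex.exp_add, neg_add_cancel, Complex.exp_zero]
    rw [Matrix.mul_apply]
    have hterm : ∀ l : Fin n, V j l * U l k =
        (α j / ((n : ℂ) * z ^ (n - 1)) * Complex.exp (-(Complex.I * x * (α j * z))) *
          Complex.exp (Complex.I * x * (α k * z))) *
          ((α j * z) ^ (n - 1 - (l : ℕ)) * (α k * z) ^ (l : ℕ)) := by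
      intro l
      rw [hV, hU]; ring
    rw [Finset.sum_congr rfl fun l _ => hterm l, ← Finset.mul_sum, key]
    by_cases hjk : j = k
    · subst hjk
      rw [if_pos rfl, Matrix.one_apply_eq]
      have hz' : z ^ (n - 1) ≠ 0 := pow_ne_zero _ hz
      field_simp
      rw [mul_pow]
      have : α j * (α j ^ (n - 1) * z ^ (n - 1)) =
          α j ^ n * z ^ (n - 1) := by
        rw [← mul_assoc, ← pow_succ']
        congr 2
        omega
      calc α j * Complex.exp (-(α j * Complex.I * ↑x * z)) *
            Complex.exp (α j * Complex.I * ↑x * z) * (α j ^ (n-1) * z ^ (n-1))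
          = (Complex.exp (-(Complex.I * ↑x * (α j * z))) *
            Complex.exp (Complex.I * ↑x * (α j * z))) * (α j * (α j ^ (n-1) * z ^ (n-1))) := by
              rw [show α j * Complex.I * ↑x * z = Complex.I * ↑x * (α j * z) by ring]; ring
        _ = (α j ^ n * z ^ (n - 1)) := by rw [hexp, one_mul, this]
        _ = z ^ (n - 1) := by rw [hroot j, one_mul]

    · rw [if_neg hjk, Matrix.one_apply_ne hjk, mul_zero]
  exact ⟨mul_eq_one_comm.mpr hVU, hVU⟩
end

section
/- Let n ≥ 1, ξ, η ∈ ℂ, and let u_0, …, u_n be smooth complex-valued functions on ℝ with u_n = 1 and u_{n−1} = 0. Suppose f₁, f₂, g₁, g₂ : ℝ → ℂ are smooth with Lf₁ = ξⁿ f₁, Lf₂ = ηⁿ f₂, L†g₁ = ξⁿ g₁, and L†g₂ = ηⁿ g₂ on ℝ. Then D[ W(f₁, g₂) · W(f₂, g₁) ] = (ξⁿ − ηⁿ) [ f₁ g₂ · W(f₂, g₁) − f₂ g₁ · W(f₁, g₂) ] on ℝ. -/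
/-- The operator `D = -i d/dx`. -/
noncomputable def Dop (f : ℝ → ℂ) : ℝ → ℂ := fun x => -Complex.I * deriv f x

/-- The operator `-D = i d/dx`. -/
noncomputable def nDop (f : ℝ → ℂ) : ℝ → ℂ := fun x => Complex.I * deriv f x

/-- The bilinear form `W(f,g) = Σ_{γ=1}^{n} Σ_{r=0}^{γ-1} (D^{γ-r-1} f)·(-D)^r (u_γ g)`. -/
noncomputable def Wform (n : ℕ) (u : ℕ → ℝ → ℂ) (f g : ℝ → ℂ) : ℝ → ℂ :=
  fun x => ∑ γ ∈ Finset.Icc 1 n, ∑ r ∈ Finset.range γ,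
    Dop^[γ - r - 1] f x * nDop^[r] (fun y => u γ y * g y) x

lemma contDiff_Dop {f : ℝ → ℂ} (hf : ContDiff ℝ (⊤:ℕ∞) f) : ContDiff ℝ (⊤:ℕ∞) (Dop f) :=
  contDiff_const.mul (contDiff_infty_iff_deriv.mp hf).2

lemma contDiff_nDop {f : ℝ → ℂ} (hf : ContDiff ℝ (⊤:ℕ∞) f) : ContDiff ℝ (⊤:ℕ∞) (nDop f) :=
  contDiff_const.mul (contDiff_infty_iff_deriv.mp hf).2

lemma contDiff_Dop_iter {f : ℝ → ℂ} (hf : ContDiff ℝ (⊤:ℕ∞) f) (k : ℕ) :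
    ContDiff ℝ (⊤:ℕ∞) (Dop^[k] f) := by
  induction k with
  | zero => exact hf
  | succ k ih => rw [Function.iterate_succ_apply']; exact contDiff_Dop ih

lemma contDiff_nDop_iter {f : ℝ → ℂ} (hf : ContDiff ℝ (⊤:ℕ∞) f) (k : ℕ) :
    ContDiff ℝ (⊤:ℕ∞) (nDop^[k] f) := by
  induction k with
  | zero => exact hf
  | succ k ih => rw [Function.iterate_succ_apply']; exact contDiff_nDop ih

lemma Dop_mul {f g : ℝ → ℂ} (hf : ContDiff ℝ (⊤:ℕ∞) f) (hg : ContDiff ℝ (⊤:ℕ∞) g) (x : ℝ) :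
    Dop (fun y => f y * g y) x = Dop f x * g x + f x * Dop g x := by
  have := deriv_fun_mul (hf.differentiable (by norm_num) x) (hg.differentiable (by norm_num) x)
  simp only [Dop, this]; ring

lemma Dop_eq_neg_nDop (f : ℝ → ℂ) (x : ℝ) : Dop f x = -(nDop f x) := by
  simp only [Dop, nDop]; ring

lemma Dop_sum {ι : Type*} {s : Finset ι} {F : ι → ℝ → ℂ}
    (h : ∀ i ∈ s, ContDiff ℝ (⊤:ℕ∞) (F i)) (x : ℝ) :
    Dop (fun y => ∑ i ∈ s, F i y) x = ∑ i ∈ s, Dop (F i) x := by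
  have : deriv (fun y => ∑ i ∈ s, F i y) x = ∑ i ∈ s, deriv (F i) x :=
    deriv_fun_sum (fun i hi => ((h i hi).differentiable (by norm_num)) x)
  simp only [Dop, this, Finset.mul_sum]

lemma contDiff_Wform {n : ℕ} {u : ℕ → ℝ → ℂ} {f g : ℝ → ℂ}
    (hu : ∀ j, ContDiff ℝ (⊤:ℕ∞) (u j)) (hf : ContDiff ℝ (⊤:ℕ∞) f)
    (hg : ContDiff ℝ (⊤:ℕ∞) g) : ContDiff ℝ (⊤:ℕ∞) (Wform n u f g) := by
  apply ContDiff.sum; intro γ _; apply ContDiff.sum; intro r _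
  exact (contDiff_Dop_iter hf _).mul (contDiff_nDop_iter ((hu γ).mul hg) _)

lemma lagrange {n : ℕ} {u : ℕ → ℝ → ℂ} {f g : ℝ → ℂ}
    (hu : ∀ j, ContDiff ℝ (⊤:ℕ∞) (u j)) (hf : ContDiff ℝ (⊤:ℕ∞) f)
    (hg : ContDiff ℝ (⊤:ℕ∞) g) (x : ℝ) :
    Dop (Wform n u f g) x
      = (∑ j ∈ Finset.range (n + 1), u j x * Dop^[j] f x) * g x
        - f x * ∑ j ∈ Finset.range (n + 1), nDop^[j] (fun y => u j y * g y) x := by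
  have hstep : Dop (Wform n u f g) x
      = ∑ γ ∈ Finset.Icc 1 n,
          (Dop^[γ] f x * (u γ x * g x) - f x * nDop^[γ] (fun y => u γ y * g y) x) := by
    unfold Wform
    rw [Dop_sum (fun γ _ => ContDiff.sum fun r _ =>
      (contDiff_Dop_iter hf _).mul (contDiff_nDop_iter ((hu γ).mul hg) _)) x]
    refine Finset.sum_congr rfl fun γ hγ => ?_
    have hγ1 : 1 ≤ γ := (Finset.mem_Icc.mp hγ).1
    rw [Dop_sum (fun r _ =>
      (contDiff_Dop_iter hf _).mul (contDiff_nDop_iter ((hu γ).mul hg) _)) x]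
    have key : ∀ r ∈ Finset.range γ,
        Dop (fun y => Dop^[γ - r - 1] f y * nDop^[r] (fun z => u γ z * g z) y) x
          = (fun r => Dop^[γ - r] f x * nDop^[r] (fun z => u γ z * g z) x) r
            - (fun r => Dop^[γ - r] f x * nDop^[r] (fun z => u γ z * g z) x) (r + 1) := by
      intro r hr
      have hrγ : r < γ := Finset.mem_range.mp hr
      simp only []
      rw [Dop_mul (contDiff_Dop_iter hf _) (contDiff_nDop_iter ((hu γ).mul hg) _)]
      have h1 : Dop (Dop^[γ - r - 1] f) = Dop^[γ - r] f := by
        have e : γ - r = (γ - r - 1) + 1 := by omega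
        rw [e, Function.iterate_succ_apply']; simp
      have h2 : Dop (nDop^[r] fun z => u γ z * g z) x
          = -(nDop^[r + 1] (fun z => u γ z * g z) x) := by
        rw [Function.iterate_succ_apply']; exact Dop_eq_neg_nDop _ _
      have h3 : γ - (r + 1) = γ - r - 1 := by omega
      rw [h1, h2, h3]
      ring
    rw [Finset.sum_congr rfl key, Finset.sum_range_sub']
    simp [Nat.sub_self]
  rw [hstep]
  have h0 : Finset.range (n + 1) = insert 0 (Finset.Icc 1 n) := by
    ext m; simp only [Finset.mem_range, Finset.mem_insert, Finset.mem_Icc]; omega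
  have A : ∑ γ ∈ Finset.Icc 1 n, Dop^[γ] f x * (u γ x * g x)
      = (∑ γ ∈ Finset.Icc 1 n, u γ x * Dop^[γ] f x) * g x := by
    rw [Finset.sum_mul]; exact Finset.sum_congr rfl fun γ _ => by ring
  have B : ∑ γ ∈ Finset.Icc 1 n, f x * nDop^[γ] (fun y => u γ y * g y) x
      = f x * ∑ γ ∈ Finset.Icc 1 n, nDop^[γ] (fun y => u γ y * g y) x :=
    (Finset.mul_sum _ _ _).symm
  rw [Finset.sum_sub_distrib, A, B, h0, Finset.sum_insert (by simp),
    Finset.sum_insert (by simp)]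
  simp only [Function.iterate_zero_apply]
  ring

/-- if `Lf₁ = ξⁿ f₁`, `Lf₂ = ηⁿ f₂`, `L†g₁ = ξⁿ g₁`, `L†g₂ = ηⁿ g₂`
on ℝ, then
`D[W(f₁,g₂)·W(f₂,g₁)] = (ξⁿ - ηⁿ)[f₁ g₂·W(f₂,g₁) - f₂ g₁·W(f₁,g₂)]` on ℝ. -/
theorem statement10 (n : ℕ) (hn : 1 ≤ n) (ξ η : ℂ) (u : ℕ → ℝ → ℂ)
    (hu : ∀ j, ContDiff ℝ (⊤ : ℕ∞) (u j))
    (hun : ∀ x, u n x = 1) (hun1 : ∀ x, u (n - 1) x = 0)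
    (f₁ f₂ g₁ g₂ : ℝ → ℂ)
    (hf₁ : ContDiff ℝ (⊤ : ℕ∞) f₁) (hf₂ : ContDiff ℝ (⊤ : ℕ∞) f₂)
    (hg₁ : ContDiff ℝ (⊤ : ℕ∞) g₁) (hg₂ : ContDiff ℝ (⊤ : ℕ∞) g₂)
    (hLf₁ : ∀ x, ∑ j ∈ Finset.range (n + 1), u j x * Dop^[j] f₁ x = ξ ^ n * f₁ x)
    (hLf₂ : ∀ x, ∑ j ∈ Finset.range (n + 1), u j x * Dop^[j] f₂ x = η ^ n * f₂ x)
    (hLg₁ : ∀ x, ∑ j ∈ Finset.range (n + 1), nDop^[j] (fun y => u j y * g₁ y) x = ξ ^ n * g₁ x)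
    (hLg₂ : ∀ x, ∑ j ∈ Finset.range (n + 1), nDop^[j] (fun y => u j y * g₂ y) x = η ^ n * g₂ x) :
    ∀ x : ℝ,
      Dop (fun y => Wform n u f₁ g₂ y * Wform n u f₂ g₁ y) x
        = (ξ ^ n - η ^ n) *
            (f₁ x * g₂ x * Wform n u f₂ g₁ x - f₂ x * g₁ x * Wform n u f₁ g₂ x) := by
  have hu' : ∀ j, ContDiff ℝ (⊤:ℕ∞) (u j) := fun j => (hu j).of_le (by simp)
  have hf₁' : ContDiff ℝ (⊤:ℕ∞) f₁ := hf₁.of_le (by simp)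
  have hf₂' : ContDiff ℝ (⊤:ℕ∞) f₂ := hf₂.of_le (by simp)
  have hg₁' : ContDiff ℝ (⊤:ℕ∞) g₁ := hg₁.of_le (by simp)
  have hg₂' : ContDiff ℝ (⊤:ℕ∞) g₂ := hg₂.of_le (by simp)
  intro x
  rw [Dop_mul (contDiff_Wform hu' hf₁' hg₂') (contDiff_Wform hu' hf₂' hg₁'),
    lagrange hu' hf₁' hg₂' x, lagrange hu' hf₂' hg₁' x, hLf₁ x, hLg₂ x, hLf₂ x, hLg₁ x]
  ring
end

section
/- Let n ≥ 2, let u_0, …, u_n be complex-valued functions with u_n = 1, u_{n−1} = 0, and u_j ∈ S(ℝ) for 0 ≤ j ≤ n−2, and let ℓ_{rs} (0 ≤ r, s ≤ n−1) be the differential operators ℓ_{rs} = Σ_{k=0}^{n−1−r−s} [ C(k+r, r)·u_{r+s+k+1}·D^k − C(k+s, s)·(−D)^k ∘ u_{r+s+k+1} ]. Then for all Schwartz functions f_0, …, f_{n−1}, g_0, …, g_{n−1} on ℝ: ∫_ℝ Σ_{r,s=0}^{n−1} (ℓ_{rs} f_s)·g_r dx = ∫_ℝ Σ_{γ=1}^{n}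 Σ_{r=0}^{γ−1} Σ_{s=0}^{r} u_γ·C(r, s)·[ (D^{r−s} f_{γ−r−1})·g_s − f_s·(D^{r−s} g_{γ−r−1}) ] dx. -/
open MeasureTheory

/-- The Gel'fand–Dikii Hamiltonian operator
`ℓ_{rs} = Σ_{k=0}^{n-1-r-s} [C(k+r,r)·u_{r+s+k+1}·D^k - C(k+s,s)·(-D)^k ∘ u_{r+s+k+1}]`. -/
noncomputable def ellOp (n : ℕ) (u : ℕ → ℝ → ℂ) (r s : ℕ) (f : ℝ → ℂ) : ℝ → ℂ :=
  fun x => ∑ k ∈ Finset.range (n - r - s),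
    (((k + r).choose r : ℂ) * u (r + s + k + 1) x * Dop^[k] f x
      - ((k + s).choose s : ℂ) * nDop^[k] (fun y => u (r + s + k + 1) y * f y) x)

noncomputable def Dc (φ : SchwartzMap ℝ ℂ) : SchwartzMap ℝ ℂ :=
  (-Complex.I) • SchwartzMap.derivCLM ℂ ℂ φ
noncomputable def nDc (φ : SchwartzMap ℝ ℂ) : SchwartzMap ℝ ℂ :=
  Complex.I • SchwartzMap.derivCLM ℂ ℂ φ

lemma Dc_apply (φ : SchwartzMap ℝ ℂ) (x : ℝ) : Dc φ x = -Complex.I * deriv φ x := by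
  simp only [Dc, SchwartzMap.smul_apply, SchwartzMap.derivCLM_apply, smul_eq_mul]

lemma nDc_apply (φ : SchwartzMap ℝ ℂ) (x : ℝ) : nDc φ x = Complex.I * deriv φ x := by
  simp only [nDc, SchwartzMap.smul_apply, SchwartzMap.derivCLM_apply, smul_eq_mul]

lemma Dop_coe (φ : SchwartzMap ℝ ℂ) : Dop ⇑φ = ⇑(Dc φ) := by
  funext x; simp [Dop, Dc_apply]

lemma nDop_coe (φ : SchwartzMap ℝ ℂ) : nDop ⇑φ = ⇑(nDc φ) := by
  funext x; simp [nDop, nDc_apply]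

lemma Dop_iter (k : ℕ) (φ : SchwartzMap ℝ ℂ) : Dop^[k] ⇑φ = ⇑(Dc^[k] φ) := by
  induction k generalizing φ with
  | zero => rfl
  | succ k ih =>
    rw [Function.iterate_succ_apply, Function.iterate_succ_apply, Dop_coe, ih]

lemma nDop_iter (k : ℕ) (φ : SchwartzMap ℝ ℂ) : nDop^[k] ⇑φ = ⇑(nDc^[k] φ) := by
  induction k generalizing φ with
  | zero => rfl
  | succ k ih =>
    rw [Function.iterate_succ_apply, Function.iterate_succ_apply, nDop_coe, ih]

lemma schwartz_htg (φ : SchwartzMap ℝ ℂ) : Function.HasTemperateGrowth ⇑φ := by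
  refine ⟨φ.smooth ⊤, fun n => ⟨0, SchwartzMap.seminorm ℝ 0 n φ, fun x => ?_⟩⟩
  simpa using SchwartzMap.norm_iteratedFDeriv_le_seminorm ℝ φ n x

/-- `sMul φ ψ = fun x => ψ x * φ x` as a Schwartz map. -/
noncomputable def sMul (φ ψ : SchwartzMap ℝ ℂ) : SchwartzMap ℝ ℂ :=
  SchwartzMap.bilinLeftCLM (ContinuousLinearMap.mul ℝ ℂ) (schwartz_htg φ) ψ

lemma sMul_apply (φ ψ : SchwartzMap ℝ ℂ) (x : ℝ) : sMul φ ψ x = ψ x * φ x := rfl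

lemma schwartz_tendsto_zero (φ : SchwartzMap ℝ ℂ) :
    Filter.Tendsto ⇑φ (Filter.atBot ⊔ Filter.atTop) (nhds 0) := by
  have h := φ.isBigO_cocompact_zpow_neg_nat 1
  rw [cocompact_eq_atBot_atTop] at h
  have hzero : Filter.Tendsto (fun y : ℝ => y ^ (-1 : ℤ)) Filter.atTop (nhds 0) :=
    tendsto_zpow_atTop_zero (by norm_num)
  have hbot : Filter.Tendsto (fun x : ℝ => ‖x‖) Filter.atBot Filter.atTop := by
    simpa [Real.norm_eq_abs] using Filter.tendsto_abs_atBot_atTop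
  have htop : Filter.Tendsto (fun x : ℝ => ‖x‖) Filter.atTop Filter.atTop := by
    simpa [Real.norm_eq_abs] using Filter.tendsto_abs_atTop_atTop
  have : Filter.Tendsto (fun x : ℝ => ‖x‖ ^ (-1 : ℤ)) (Filter.atBot ⊔ Filter.atTop) (nhds 0) := by
    rw [Filter.tendsto_sup]
    exact ⟨hzero.comp hbot, hzero.comp htop⟩
  simpa using h.trans_tendsto this

lemma integral_deriv_schwartz (φ : SchwartzMap ℝ ℂ) : ∫ x : ℝ, deriv φ x = 0 := by
  have hcont : Continuous (deriv ⇑φ) := by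
    have : deriv ⇑φ = ⇑(SchwartzMap.derivCLM ℂ ℂ φ) := by
      funext x; rw [SchwartzMap.derivCLM_apply]
    rw [this]; exact (SchwartzMap.derivCLM ℂ ℂ φ).continuous
  have hint : Integrable (deriv ⇑φ) := by
    have : deriv ⇑φ = ⇑(SchwartzMap.derivCLM ℂ ℂ φ) := by
      funext x; rw [SchwartzMap.derivCLM_apply]
    rw [this]; exact (SchwartzMap.derivCLM ℂ ℂ φ).integrable
  have h1 : Filter.Tendsto (fun R : ℝ => ∫ x in (-R)..R, deriv φ x) Filter.atTop
      (nhds (∫ x : ℝ, deriv φ x)) :=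
    intervalIntegral_tendsto_integral hint Filter.tendsto_neg_atTop_atBot Filter.tendsto_id
  have h2 : ∀ R : ℝ, (∫ x in (-R)..R, deriv φ x) = φ R - φ (-R) := fun R =>
    intervalIntegral.integral_deriv_eq_sub (fun x _ => φ.differentiableAt)
      (hcont.intervalIntegrable _ _)
  have h3 : Filter.Tendsto (fun R : ℝ => φ R - φ (-R)) Filter.atTop (nhds 0) := by
    have ht := (schwartz_tendsto_zero φ).mono_left le_sup_right
    have hb := ((schwartz_tendsto_zero φ).mono_left le_sup_left).comp
      Filter.tendsto_neg_atTop_atBot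
    simpa using ht.sub hb
  have := h1
  simp_rw [h2] at this
  exact tendsto_nhds_unique this h3

lemma ibp (φ ψ : SchwartzMap ℝ ℂ) :
    ∫ x : ℝ, nDc φ x * ψ x = ∫ x : ℝ, φ x * Dc ψ x := by
  have hprod : ∀ x : ℝ, deriv (fun y => φ y * ψ y) x = deriv φ x * ψ x + φ x * deriv ψ x :=
    fun x => deriv_mul φ.differentiableAt ψ.differentiableAt
  have hps : (fun y => φ y * ψ y) = ⇑(sMul ψ φ) := by funext x; rw [sMul_apply]
  have hz : ∫ x : ℝ, (Complex.I * (deriv φ x * ψ x + φ x * deriv ψ x)) = 0 := by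
    have : ∀ x : ℝ, Complex.I * (deriv φ x * ψ x + φ x * deriv ψ x)
        = Complex.I * deriv (⇑(sMul ψ φ)) x := by
      intro x; rw [← hps, hprod]
    simp_rw [this]
    rw [MeasureTheory.integral_const_mul, integral_deriv_schwartz, mul_zero]
  have key : ∀ x : ℝ, nDc φ x * ψ x - φ x * Dc ψ x
      = Complex.I * (deriv φ x * ψ x + φ x * deriv ψ x) := by
    intro x; rw [nDc_apply, Dc_apply]; ring
  have hint1 : Integrable (fun x : ℝ => nDc φ x * ψ x) := by
    have : (fun x : ℝ => nDc φ x * ψ x) = ⇑(sMul ψ (nDc φ)) := by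
      funext x; rw [sMul_apply]
    rw [this]; exact SchwartzMap.integrable _
  have hint2 : Integrable (fun x : ℝ => φ x * Dc ψ x) := by
    have : (fun x : ℝ => φ x * Dc ψ x) = ⇑(sMul (Dc ψ) φ) := by
      funext x; rw [sMul_apply]
    rw [this]; exact SchwartzMap.integrable _
  have := MeasureTheory.integral_sub hint1 hint2
  rw [← sub_eq_zero, ← this]
  simp_rw [key]
  exact hz

lemma ibp_iter (k : ℕ) (φ ψ : SchwartzMap ℝ ℂ) :
    ∫ x : ℝ, (nDc^[k] φ) x * ψ x = ∫ x : ℝ, φ x * (Dc^[k] ψ) x := by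
  induction k generalizing φ ψ with
  | zero => rfl
  | succ k ih =>
    rw [Function.iterate_succ_apply, Function.iterate_succ_apply']
    rw [ih (nDc φ) ψ, ibp]

lemma sum_filter_prod_eq (n : ℕ) (F : ℕ → ℕ → ℕ → ℂ) :
    (∑ r ∈ Finset.range n, ∑ s ∈ Finset.range n, ∑ k ∈ Finset.range (n - r - s), F r s k)
    = ∑ p ∈ (Finset.range n ×ˢ Finset.range n ×ˢ Finset.range n).filter
        (fun p : ℕ × ℕ × ℕ => p.1 + p.2.1 + p.2.2 < n), F p.1 p.2.1 p.2.2 := by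
  rw [Finset.sum_filter, Finset.sum_product]
  refine Finset.sum_congr rfl fun r _ => ?_
  rw [Finset.sum_product]
  refine Finset.sum_congr rfl fun s _ => ?_
  rw [← Finset.sum_filter]
  refine Finset.sum_congr ?_ fun k _ => rfl
  ext k
  simp only [Finset.mem_filter, Finset.mem_range]
  omega

lemma sum_filter_prod_eq' (n : ℕ) (G : ℕ → ℕ → ℕ → ℂ) :
    (∑ γ ∈ Finset.Icc 1 n, ∑ r ∈ Finset.range γ, ∑ s ∈ Finset.range (r + 1), G γ r s)
    = ∑ q ∈ (Finset.Icc 1 n ×ˢ Finset.range n ×ˢ Finset.range n).filter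
        (fun q : ℕ × ℕ × ℕ => q.2.1 < q.1 ∧ q.2.2 ≤ q.2.1), G q.1 q.2.1 q.2.2 := by
  rw [Finset.sum_filter, Finset.sum_product]
  refine Finset.sum_congr rfl fun γ hγ => ?_
  rw [Finset.mem_Icc] at hγ
  rw [Finset.sum_product]
  have h1 : Finset.range γ = (Finset.range n).filter (fun r => r < γ) := by
    ext r; simp only [Finset.mem_filter, Finset.mem_range]; omega
  rw [h1, Finset.sum_filter]
  refine Finset.sum_congr rfl fun r _ => ?_
  by_cases hr : r < γ
  · simp only [hr, if_true]
    have h2 : Finset.range (r + 1) = (Finset.range n).filter (fun s => s ≤ r) := by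
      ext s; simp only [Finset.mem_filter, Finset.mem_range]; omega
    rw [h2, Finset.sum_filter]
    refine Finset.sum_congr rfl fun s _ => ?_
    by_cases hs : s ≤ r <;> simp [hr, hs]
  · simp only [hr, if_false]
    rw [Finset.sum_eq_zero]
    intro s _
    simp [hr]

lemma reindex (n : ℕ) (F : ℕ → ℕ → ℕ → ℂ) :
    (∑ r ∈ Finset.range n, ∑ s ∈ Finset.range n, ∑ k ∈ Finset.range (n - r - s), F r s k)
    = ∑ γ ∈ Finset.Icc 1 n, ∑ r ∈ Finset.range γ, ∑ s ∈ Finset.range (r + 1),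
        F s (γ - r - 1) (r - s) := by
  rw [sum_filter_prod_eq n F, sum_filter_prod_eq' n (fun γ r s => F s (γ - r - 1) (r - s))]
  refine Finset.sum_nbij' (fun p => (p.1 + p.2.1 + p.2.2 + 1, p.2.2 + p.1, p.1))
    (fun q => (q.2.2, q.1 - q.2.1 - 1, q.2.1 - q.2.2)) ?_ ?_ ?_ ?_ ?_
  · intro p hp
    simp only [Finset.mem_filter, Finset.mem_product, Finset.mem_range, Finset.mem_Icc] at hp ⊢
    omega
  · intro q hq
    simp only [Finset.mem_filter, Finset.mem_product, Finset.mem_range, Finset.mem_Icc] at hq ⊢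
    omega
  · rintro ⟨a, b, c⟩ hp
    simp only [Finset.mem_filter, Finset.mem_product, Finset.mem_range] at hp
    simp only [Prod.mk.injEq, true_and, and_true]
    omega
  · rintro ⟨a, b, c⟩ hq
    simp only [Finset.mem_filter, Finset.mem_product, Finset.mem_range, Finset.mem_Icc] at hq
    simp only [Prod.mk.injEq, true_and, and_true]
    omega
  · intro p hp
    have h1 : p.2.2 + p.1 - p.1 = p.2.2 := by omega
    have h2 : p.1 + p.2.1 + p.2.2 + 1 - (p.2.2 + p.1) - 1 = p.2.1 := by omega
    simp only [h1, h2]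

noncomputable def Pint (u : ℕ → ℝ → ℂ) (f g : ℕ → SchwartzMap ℝ ℂ) (γ k a b : ℕ) : ℂ :=
  ∫ x : ℝ, u γ x * (Dc^[k] (f a)) x * (g b) x

noncomputable def Qint (u : ℕ → ℝ → ℂ) (f g : ℕ → SchwartzMap ℝ ℂ) (γ k a b : ℕ) : ℂ :=
  ∫ x : ℝ, u γ x * (f a) x * (Dc^[k] (g b)) x


/-- for `u_n = 1`, `u_{n-1} = 0`, `u_j ∈ S(ℝ)` for `j ≤ n-2`, and
Schwartz functions `f_0, …, f_{n-1}, g_0, …, g_{n-1}`,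
`∫ Σ_{r,s} (ℓ_{rs} f_s)·g_r dx
  = ∫ Σ_{γ=1}^{n} Σ_{r=0}^{γ-1} Σ_{s=0}^{r} u_γ C(r,s)[(D^{r-s} f_{γ-r-1})·g_s - f_s·(D^{r-s} g_{γ-r-1})] dx`. -/
theorem statement18 (n : ℕ) (hn : 2 ≤ n) (u : ℕ → ℝ → ℂ)
    (hun : ∀ x, u n x = 1) (hun1 : ∀ x, u (n - 1) x = 0)
    (hu : ∀ j, j ≤ n - 2 → ∃ φ : SchwartzMap ℝ ℂ, ∀ x, u j x = φ x)
    (f g : ℕ → SchwartzMap ℝ ℂ) :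
    ∫ x : ℝ, ∑ r ∈ Finset.range n, ∑ s ∈ Finset.range n,
        ellOp n u r s (⇑(f s)) x * g r x
    = ∫ x : ℝ, ∑ γ ∈ Finset.Icc 1 n, ∑ r ∈ Finset.range γ, ∑ s ∈ Finset.range (r + 1),
        u γ x * (r.choose s : ℂ) *
          (Dop^[r - s] (⇑(f (γ - r - 1))) x * g s x
            - f s x * Dop^[r - s] (⇑(g (γ - r - 1))) x) := by
  classical
  have hrep : ∀ (γ : ℕ) (φ : SchwartzMap ℝ ℂ), ∃ ψ : SchwartzMap ℝ ℂ,
      γ ≤ n → ∀ x, ψ x = u γ x * φ x := by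
    intro γ φ
    by_cases hγn : γ = n
    · exact ⟨φ, fun _ x => by rw [hγn, hun x, one_mul]⟩
    · by_cases hγ1 : γ = n - 1
      · refine ⟨0, fun _ x => ?_⟩
        rw [hγ1, hun1 x, zero_mul]
        rfl
      · by_cases hγ2 : γ ≤ n - 2
        · obtain ⟨χ, hχ⟩ := hu γ hγ2
          exact ⟨sMul χ φ, fun _ x => by rw [sMul_apply, hχ x, mul_comm]⟩
        · exact ⟨0, fun hle => absurd hle (by omega)⟩
  choose Ψ hΨ using hrep
  have hfun : ∀ (γ : ℕ), γ ≤ n → ∀ (φ : SchwartzMap ℝ ℂ),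
      (fun x => u γ x * φ x) = ⇑(Ψ γ φ) := fun γ hγ φ => funext fun x => (hΨ γ φ hγ x).symm
  have hint : ∀ (γ : ℕ), γ ≤ n → ∀ (φ ψ : SchwartzMap ℝ ℂ),
      Integrable (fun x => u γ x * φ x * ψ x) := by
    intro γ hγ φ ψ
    have h : (fun x => u γ x * φ x * ψ x) = ⇑(sMul ψ (Ψ γ φ)) := by
      funext x; rw [sMul_apply, hΨ γ φ hγ x]
    rw [h]
    exact SchwartzMap.integrable _
  have hint2 : ∀ (φ ψ : SchwartzMap ℝ ℂ), Integrable (fun x => φ x * ψ x) := by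
    intro φ ψ
    have h : (fun x => φ x * ψ x) = ⇑(sMul ψ φ) := by
      funext x; rw [sMul_apply]
    rw [h]
    exact SchwartzMap.integrable _
  -- LHS computation
  have hLHS : (∫ x : ℝ, ∑ r ∈ Finset.range n, ∑ s ∈ Finset.range n,
        ellOp n u r s (⇑(f s)) x * g r x)
      = ∑ r ∈ Finset.range n, ∑ s ∈ Finset.range n, ∑ k ∈ Finset.range (n - r - s),
          (((k + r).choose r : ℂ) * Pint u f g (r + s + k + 1) k s r
            - ((k + s).choose s : ℂ) * Qint u f g (r + s + k + 1) k s r) := by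
    have step1 : (∫ x : ℝ, ∑ r ∈ Finset.range n, ∑ s ∈ Finset.range n,
          ellOp n u r s (⇑(f s)) x * g r x)
        = ∫ x : ℝ, ∑ r ∈ Finset.range n, ∑ s ∈ Finset.range n,
            ∑ k ∈ Finset.range (n - r - s),
              (((k + r).choose r : ℂ) * (u (r + s + k + 1) x * (Dc^[k] (f s)) x * g r x)
                - ((k + s).choose s : ℂ)
                    * ((nDc^[k] (Ψ (r + s + k + 1) (f s))) x * g r x)) := by
      congr 1
      funext x
      refine Finset.sum_congr rfl fun r hr => ?_
      refine Finset.sum_congr rfl fun s hs => ?_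
      rw [ellOp, Finset.sum_mul]
      refine Finset.sum_congr rfl fun k hk => ?_
      rw [Finset.mem_range] at hr hs hk
      have hγ : r + s + k + 1 ≤ n := by omega
      rw [Dop_iter, hfun _ hγ (f s), nDop_iter]
      ring
    have hTint : ∀ r ∈ Finset.range n, ∀ s ∈ Finset.range n,
        ∀ k ∈ Finset.range (n - r - s),
        Integrable (fun x : ℝ =>
          ((k + r).choose r : ℂ) * (u (r + s + k + 1) x * (Dc^[k] (f s)) x * g r x)
            - ((k + s).choose s : ℂ) * ((nDc^[k] (Ψ (r + s + k + 1) (f s))) x * g r x)) := by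
      intro r hr s hs k hk
      rw [Finset.mem_range] at hr hs hk
      have hγ : r + s + k + 1 ≤ n := by omega
      exact ((hint _ hγ (Dc^[k] (f s)) (g r)).const_mul _).sub
        ((hint2 (nDc^[k] (Ψ (r + s + k + 1) (f s))) (g r)).const_mul _)
    rw [step1, integral_finset_sum _ (fun r hr => integrable_finset_sum _
      (fun s hs => integrable_finset_sum _ (fun k hk => hTint r hr s hs k hk)))]
    refine Finset.sum_congr rfl fun r hr => ?_
    rw [integral_finset_sum _ (fun s hs => integrable_finset_sum _
      (fun k hk => hTint r hr s hs k hk))]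
    refine Finset.sum_congr rfl fun s hs => ?_
    rw [integral_finset_sum _ (fun k hk => hTint r hr s hs k hk)]
    refine Finset.sum_congr rfl fun k hk => ?_
    rw [Finset.mem_range] at hr hs hk
    have hγ : r + s + k + 1 ≤ n := by omega
    rw [MeasureTheory.integral_sub ((hint _ hγ (Dc^[k] (f s)) (g r)).const_mul _)
      ((hint2 (nDc^[k] (Ψ (r + s + k + 1) (f s))) (g r)).const_mul _),
      MeasureTheory.integral_const_mul, MeasureTheory.integral_const_mul]
    congr 1
    congr 1
    rw [ibp_iter]
    show (∫ x : ℝ, Ψ (r + s + k + 1) (f s) x * (Dc^[k] (g r)) x)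
      = ∫ x : ℝ, u (r + s + k + 1) x * (f s) x * (Dc^[k] (g r)) x
    congr 1
    funext x
    rw [hΨ _ (f s) hγ x]
  -- RHS computation
  have hRHS : (∫ x : ℝ, ∑ γ ∈ Finset.Icc 1 n, ∑ r ∈ Finset.range γ,
        ∑ s ∈ Finset.range (r + 1),
        u γ x * (r.choose s : ℂ) *
          (Dop^[r - s] (⇑(f (γ - r - 1))) x * g s x
            - f s x * Dop^[r - s] (⇑(g (γ - r - 1))) x))
      = ∑ γ ∈ Finset.Icc 1 n, ∑ r ∈ Finset.range γ, ∑ s ∈ Finset.range (r + 1),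
          ((r.choose s : ℂ) * Pint u f g γ (r - s) (γ - r - 1) s
            - (r.choose s : ℂ) * Qint u f g γ (r - s) s (γ - r - 1)) := by
    have step1 : (∫ x : ℝ, ∑ γ ∈ Finset.Icc 1 n, ∑ r ∈ Finset.range γ,
          ∑ s ∈ Finset.range (r + 1),
          u γ x * (r.choose s : ℂ) *
            (Dop^[r - s] (⇑(f (γ - r - 1))) x * g s x
              - f s x * Dop^[r - s] (⇑(g (γ - r - 1))) x))
        = ∫ x : ℝ, ∑ γ ∈ Finset.Icc 1 n, ∑ r ∈ Finset.range γ,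
            ∑ s ∈ Finset.range (r + 1),
            ((r.choose s : ℂ) * (u γ x * (Dc^[r - s] (f (γ - r - 1))) x * g s x)
              - (r.choose s : ℂ) * (u γ x * (f s) x * (Dc^[r - s] (g (γ - r - 1))) x)) := by
      congr 1
      funext x
      refine Finset.sum_congr rfl fun γ hγ => ?_
      refine Finset.sum_congr rfl fun r hr => ?_
      refine Finset.sum_congr rfl fun s hs => ?_
      rw [Dop_iter, Dop_iter]
      ring
    have hTint : ∀ γ ∈ Finset.Icc 1 n, ∀ r ∈ Finset.range γ, ∀ s ∈ Finset.range (r + 1),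
        Integrable (fun x : ℝ =>
          (r.choose s : ℂ) * (u γ x * (Dc^[r - s] (f (γ - r - 1))) x * g s x)
            - (r.choose s : ℂ) * (u γ x * (f s) x * (Dc^[r - s] (g (γ - r - 1))) x)) := by
      intro γ hγ r hr s hs
      rw [Finset.mem_Icc] at hγ
      exact ((hint _ hγ.2 (Dc^[r - s] (f (γ - r - 1))) (g s)).const_mul _).sub
        ((hint _ hγ.2 (f s) (Dc^[r - s] (g (γ - r - 1)))).const_mul _)
    rw [step1, integral_finset_sum _ (fun γ hγ => integrable_finset_sum _
      (fun r hr => integrable_finset_sum _ (fun s hs => hTint γ hγ r hr s hs)))]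
    refine Finset.sum_congr rfl fun γ hγ => ?_
    rw [integral_finset_sum _ (fun r hr => integrable_finset_sum _
      (fun s hs => hTint γ hγ r hr s hs))]
    refine Finset.sum_congr rfl fun r hr => ?_
    rw [integral_finset_sum _ (fun s hs => hTint γ hγ r hr s hs)]
    refine Finset.sum_congr rfl fun s hs => ?_
    rw [Finset.mem_Icc] at hγ
    rw [MeasureTheory.integral_sub ((hint _ hγ.2 (Dc^[r - s] (f (γ - r - 1))) (g s)).const_mul _)
      ((hint _ hγ.2 (f s) (Dc^[r - s] (g (γ - r - 1)))).const_mul _),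
      MeasureTheory.integral_const_mul, MeasureTheory.integral_const_mul]
    rfl
  rw [hLHS, hRHS]
  simp only [Finset.sum_sub_distrib]
  congr 1
  · -- P part
    rw [reindex n (fun r s k => ((k + r).choose r : ℂ) * Pint u f g (r + s + k + 1) k s r)]
    refine Finset.sum_congr rfl fun γ hγ => Finset.sum_congr rfl fun r hr =>
      Finset.sum_congr rfl fun s hs => ?_
    rw [Finset.mem_Icc] at hγ
    rw [Finset.mem_range] at hr hs
    have e1 : r - s + s = r := by omega
    have e2 : s + (γ - r - 1) + (r - s) + 1 = γ := by omega
    rw [e1, e2]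
  · -- Q part
    have hmid : (∑ r ∈ Finset.range n, ∑ s ∈ Finset.range n, ∑ k ∈ Finset.range (n - r - s),
          ((k + s).choose s : ℂ) * Qint u f g (r + s + k + 1) k s r)
        = ∑ a ∈ Finset.range n, ∑ b ∈ Finset.range n, ∑ k ∈ Finset.range (n - a - b),
            ((k + a).choose a : ℂ) * Qint u f g (b + a + k + 1) k a b := by
      rw [Finset.sum_comm]
      refine Finset.sum_congr rfl fun a _ => Finset.sum_congr rfl fun b _ => ?_
      rw [show n - b - a = n - a - b from by omega]
    rw [hmid, reindex n (fun a b k => ((k + a).choose a : ℂ) * Qint u f g (b + a + k + 1) k a b)]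
    refine Finset.sum_congr rfl fun γ hγ => Finset.sum_congr rfl fun r hr =>
      Finset.sum_congr rfl fun s hs => ?_
    rw [Finset.mem_Icc] at hγ
    rw [Finset.mem_range] at hr hs
    have e1 : r - s + s = r := by omega
    have e2 : γ - r - 1 + s + (r - s) + 1 = γ := by omega
    rw [e1, e2]
end
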